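/- Let n, m ≥ 0 and for an admissible word w : {−n, …, m} → {0,1} define S(w) := {p ∈ ℝ² : there is a finite orbit segment (p_k)_{−n ≤ k ≤ m} with p_{k+1} = f(p_k) for −n ≤ k < m, p_k ∈ int R_{w(k)} for all k, and p₀ = p}. If w and w̃ are two distinct admissible words on {−n, …, m}, then the closures in ℝ² of S(w) and of S(w̃) are disjoint. -/

import Mathlib

open Filter

/-- The birational map f(x,y) = (y(x+a)/(x-1), x+a-1). -/
noncomputable def birat (a : ℝ) (p : ℝ × ℝ) : ℝ × ℝ :=
  (p.2 * (p.1 + a) / (p.1 - 1), p.1 + a - 1)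

/-- The inverse map f⁻¹(x,y) = (y+1-a, x(y-a)/(y+1)). -/
noncomputable def biratInv (a : ℝ) (p : ℝ × ℝ) : ℝ × ℝ :=
  (p.2 + 1 - a, p.1 * (p.2 - a) / (p.2 + 1))

/-- The forward orbit of `p` is defined up to time `n`. -/
def orbitDefined (a : ℝ) (p : ℝ × ℝ) (n : ℕ) : Prop :=
  ∀ k < n, ((birat a)^[k] p).1 ≠ 1

def Rplus : Set (ℝ × ℝ) := {p | p.1 ≤ 1 ∧ p.2 ≤ 0}
def Rminus : Set (ℝ × ℝ) := {p | 0 ≤ p.1 ∧ -1 ≤ p.2}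
def Rzero : Set (ℝ × ℝ) := {p | 1 ≤ p.1 ∧ p.2 ≤ -1}
def Rone : Set (ℝ × ℝ) := {p | p.1 ≤ 0 ∧ 0 ≤ p.2}
def intRplus : Set (ℝ × ℝ) := {p | p.1 < 1 ∧ p.2 < 0}
def intRzero : Set (ℝ × ℝ) := {p | 1 < p.1 ∧ p.2 < -1}
def intRone : Set (ℝ × ℝ) := {p | p.1 < 0 ∧ 0 < p.2}

/-- `Rw 0 = R₀`, `Rw 1 = R₁`. -/
def Rw (i : Fin 2) : Set (ℝ × ℝ) := if i = 0 then Rzero else Rone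

/-- `intRw 0 = int R₀`, `intRw 1 = int R₁`. -/
def intRw (i : Fin 2) : Set (ℝ × ℝ) := if i = 0 then intRzero else intRone

/-- Euclidean distance on ℝ². -/
noncomputable def eucDist (p q : ℝ × ℝ) : ℝ :=
  Real.sqrt ((p.1 - q.1) ^ 2 + (p.2 - q.2) ^ 2)

/-- The set of points `p` admitting an orbit segment `(p_k)_{-n ≤ k ≤ m}` with `p₀ = p`,
`p_{k+1} = f(p_k)` and `p_k ∈ int R_{w(k)}` for all `k` in range. -/
def Sseg (a : ℝ) (n m : ℕ) (w : ℤ → Fin 2) : Set (ℝ × ℝ) :=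
  {p | ∃ q : ℤ → ℝ × ℝ, q 0 = p ∧
    (∀ k : ℤ, -(n : ℤ) ≤ k → k < (m : ℤ) → q (k + 1) = birat a (q k)) ∧
    (∀ k : ℤ, -(n : ℤ) ≤ k → k ≤ (m : ℤ) → q k ∈ intRw (w k))}

/- ### Auxiliary material -/

open Topology

section aux

lemma fin2 (i : Fin 2) : i = 0 ∨ i = 1 := by omega

lemma intRw_zero : intRw 0 = intRzero := rfl
lemma intRw_one : intRw 1 = intRone := rfl
lemma Rw_zero : Rw 0 = Rzero := rfl
lemma Rw_one : Rw 1 = Rone := rfl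

lemma Rw_closed (i : Fin 2) : IsClosed (Rw i) := by
  rcases fin2 i with rfl | rfl
  · exact (isClosed_le continuous_const continuous_fst).inter
      (isClosed_le continuous_snd continuous_const)
  · exact (isClosed_le continuous_fst continuous_const).inter
      (isClosed_le continuous_const continuous_snd)

lemma intRw_subset_Rw (i : Fin 2) : intRw i ⊆ Rw i := by
  rcases fin2 i with rfl | rfl <;> intro p hp <;>
    exact ⟨le_of_lt hp.1, le_of_lt hp.2⟩

lemma lim_mem {q : ℕ → ℝ × ℝ} {i : Fin 2} {z : ℝ × ℝ}
    (hq : ∀ j, q j ∈ intRw i) (hz : Tendsto q atTop (𝓝 z)) : z ∈ Rw i :=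
  (Rw_closed i).mem_of_tendsto hz (Eventually.of_forall fun j => intRw_subset_Rw i (hq j))

lemma Rw_unique {z : ℝ × ℝ} {i i' : Fin 2} (h : z ∈ Rw i) (h' : z ∈ Rw i') : i = i' := by
  rcases fin2 i with rfl | rfl <;> rcases fin2 i' with rfl | rfl <;> try rfl
  · exfalso; have h1 : (1:ℝ) ≤ z.1 := h.1; have h2 : z.1 ≤ 0 := h'.1; linarith
  · exfalso; have h1 : (1:ℝ) ≤ z.1 := h'.1; have h2 : z.1 ≤ 0 := h.1; linarith

lemma force_zero {i : Fin 2} {q : ℕ → ℝ × ℝ} (hm : ∀ j, q j ∈ intRw i)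
    (h : ∀ᶠ j in atTop, 0 ≤ (q j).1) : i = 0 := by
  rcases fin2 i with h0 | h1
  · exact h0
  · exfalso
    obtain ⟨j, hj⟩ := h.exists
    have hmj := hm j; rw [h1, intRw_one] at hmj
    exact absurd hj (not_le.mpr hmj.1)

lemma force_one {i : Fin 2} {q : ℕ → ℝ × ℝ} (hm : ∀ j, q j ∈ intRw i)
    (h : ∀ᶠ j in atTop, (q j).1 ≤ 1) : i = 1 := by
  rcases fin2 i with h0 | h1
  · exfalso
    obtain ⟨j, hj⟩ := h.exists
    have hmj := hm j; rw [h0, intRw_zero] at hmj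
    have := hmj.1; linarith
  · exact h1

lemma tfst {q : ℕ → ℝ × ℝ} {z : ℝ × ℝ} (h : Tendsto q atTop (𝓝 z)) :
    Tendsto (fun j => (q j).1) atTop (𝓝 z.1) := (continuous_fst.tendsto z).comp h
lemma tsnd {q : ℕ → ℝ × ℝ} {z : ℝ × ℝ} (h : Tendsto q atTop (𝓝 z)) :
    Tendsto (fun j => (q j).2) atTop (𝓝 z.2) := (continuous_snd.tendsto z).comp h

lemma ratio_atTop (a : ℝ) {x : ℕ → ℝ} (hx : Tendsto x atTop atTop) :
    Tendsto (fun j => (x j + a) / (x j - 1)) atTop (𝓝 1) := by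
  have h1 : Tendsto (fun j => x j - 1) atTop atTop :=
    tendsto_atTop_add_const_right atTop (-1) hx |>.congr (fun j => by ring)
  have h2 : Tendsto (fun j => 1 + (a + 1) * (x j - 1)⁻¹) atTop (𝓝 1) := by
    have := (h1.inv_tendsto_atTop).const_mul (a + 1)
    simpa using tendsto_const_nhds.add this
  have hev : ∀ᶠ j in atTop, 1 + (a + 1) * (x j - 1)⁻¹ = (x j + a) / (x j - 1) := by
    filter_upwards [h1.eventually_gt_atTop 0] with j hj
    field_simp
    ring
  exact h2.congr' hev

lemma ratio_atBot (a : ℝ) {y : ℕ → ℝ} (hy : Tendsto y atTop atBot) :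
    Tendsto (fun j => (y j - a) / (y j + 1)) atTop (𝓝 1) := by
  have h1 : Tendsto (fun j => y j + 1) atTop atBot := tendsto_atBot_add_const_right atTop 1 hy
  have h1' : Tendsto (fun j => (y j + 1)⁻¹) atTop (𝓝 0) := by
    have h0 : Tendsto (fun j => -(y j + 1)) atTop atTop := tendsto_neg_atBot_atTop.comp h1
    have h2 : Tendsto (fun j => (-(y j + 1))⁻¹) atTop (𝓝 0) := h0.inv_tendsto_atTop
    have h3 := h2.neg
    simp only [neg_zero] at h3
    exact h3.congr fun j => by rw [inv_neg, neg_neg]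
  have h2 : Tendsto (fun j => 1 + (-a - 1) * (y j + 1)⁻¹) atTop (𝓝 1) := by
    simpa using tendsto_const_nhds.add (h1'.const_mul (-a - 1))
  have hev : ∀ᶠ j in atTop, 1 + (-a - 1) * (y j + 1)⁻¹ = (y j - a) / (y j + 1) := by
    filter_upwards [h1.eventually_lt_atBot 0] with j hj
    have : y j + 1 ≠ 0 := ne_of_lt hj
    field_simp
    ring
  exact h2.congr' hev

lemma div_tendsto_atTop {f g : ℕ → ℝ} {c : ℝ} (hc : 0 < c)
    (hf : Tendsto f atTop (𝓝 c)) (hg : Tendsto g atTop (𝓝 0)) (hpos : ∀ j, 0 < g j) :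
    Tendsto (fun j => f j / g j) atTop atTop := by
  have hg' : Tendsto g atTop (𝓝[>] 0) :=
    tendsto_nhdsWithin_iff.mpr ⟨hg, Eventually.of_forall hpos⟩
  have : Tendsto (fun j => f j * (g j)⁻¹) atTop atTop := hf.pos_mul_atTop hc hg'.inv_tendsto_nhdsGT_zero
  exact this.congr fun j => (div_eq_mul_inv _ _).symm

lemma div_tendsto_atBot {f g : ℕ → ℝ} {c : ℝ} (hc : 0 < c)
    (hf : Tendsto f atTop (𝓝 c)) (hg : Tendsto g atTop (𝓝 0)) (hneg : ∀ j, g j < 0) :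
    Tendsto (fun j => f j / g j) atTop atBot := by
  have hg' : Tendsto (fun j => -g j) atTop (𝓝[>] 0) :=
    tendsto_nhdsWithin_iff.mpr ⟨by simpa using hg.neg, Eventually.of_forall fun j => by
      simpa using hneg j⟩
  have h1 : Tendsto (fun j => f j * (-g j)⁻¹) atTop atTop := hf.pos_mul_atTop hc hg'.inv_tendsto_nhdsGT_zero
  have h2 : Tendsto (fun j => -(f j * (-g j)⁻¹)) atTop atBot := tendsto_neg_atTop_atBot.comp h1
  exact h2.congr fun j => by rw [inv_neg, div_eq_mul_inv]; ring

variable {a b c : ℝ} {q r : ℕ → ℝ × ℝ}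

lemma fwd_AB (ha : a < -1) (hb : b < 0)
    (hq : ∀ j, q j ∈ intRzero) (hr : ∀ j, r j = birat a (q j))
    (h1 : Tendsto (fun j => (q j).1) atTop atTop)
    (h2 : Tendsto (fun j => (q j).2) atTop (𝓝 b)) :
    Tendsto (fun j => (r j).1) atTop (𝓝 b) ∧ Tendsto (fun j => (r j).2) atTop atTop := by
  constructor
  · have hrat := ratio_atTop a h1
    have hmul : Tendsto (fun j => (q j).2 * (((q j).1 + a) / ((q j).1 - 1))) atTop (𝓝 b) := by
      simpa using h2.mul hrat
    exact hmul.congr fun j => by rw [hr j]; (try simp only [birat]); rw [mul_div_assoc]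
  · have := tendsto_atTop_add_const_right atTop (a - 1) h1
    exact this.congr fun j => by rw [hr j]; (try simp only [birat]); ring

lemma fwd_BA (ha : a < -1) (hb : b < 0)
    (hq : ∀ j, q j ∈ intRone) (hr : ∀ j, r j = birat a (q j))
    (h1 : Tendsto (fun j => (q j).1) atTop (𝓝 b))
    (h2 : Tendsto (fun j => (q j).2) atTop atTop) :
    Tendsto (fun j => (r j).1) atTop atTop ∧
      Tendsto (fun j => (r j).2) atTop (𝓝 (b + a - 1)) := by
  have hden : b - 1 ≠ 0 := by intro h; linarith [sub_eq_zero.mp h]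
  have hrat : Tendsto (fun j => ((q j).1 + a) / ((q j).1 - 1)) atTop (𝓝 ((b + a) / (b - 1))) :=
    (h1.add tendsto_const_nhds).div (h1.sub tendsto_const_nhds) hden
  have hratpos : 0 < (b + a) / (b - 1) := by
    rw [div_pos_iff]; right; constructor <;> linarith
  constructor
  · have hmul : Tendsto (fun j => (q j).2 * (((q j).1 + a) / ((q j).1 - 1))) atTop atTop :=
      h2.atTop_mul_pos hratpos hrat
    exact hmul.congr fun j => by rw [hr j]; (try simp only [birat]); rw [mul_div_assoc]
  · have : Tendsto (fun j => (q j).1 + a - 1) atTop (𝓝 (b + a - 1)) :=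
      (h1.add tendsto_const_nhds).sub tendsto_const_nhds
    exact this.congr fun j => by rw [hr j]; try simp only [birat, biratInv]

lemma fwd_start (ha : a < -1) {z2 : ℝ} (hz2 : z2 ≤ -1)
    (hq : ∀ j, q j ∈ intRzero) (hr : ∀ j, r j = birat a (q j))
    (h1 : Tendsto (fun j => (q j).1) atTop (𝓝 1))
    (h2 : Tendsto (fun j => (q j).2) atTop (𝓝 z2)) :
    Tendsto (fun j => (r j).1) atTop atTop ∧ Tendsto (fun j => (r j).2) atTop (𝓝 a) := by
  have hcpos : 0 < z2 * (1 + a) :=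
    mul_pos_of_neg_of_neg (lt_of_le_of_lt hz2 (by norm_num)) (by linarith)
  constructor
  · have hnum : Tendsto (fun j => (q j).2 * ((q j).1 + a)) atTop (𝓝 (z2 * (1 + a))) :=
      h2.mul (h1.add tendsto_const_nhds)
    have hden : Tendsto (fun j => (q j).1 - 1) atTop (𝓝 0) := by
      have := h1.sub (tendsto_const_nhds (x := (1 : ℝ)))
      simpa using this
    have hpos : ∀ j, 0 < (q j).1 - 1 := fun j => by have := (hq j).1; simpa [sub_pos] using this
    have := div_tendsto_atTop hcpos hnum hden hpos
    exact this.congr fun j => by rw [hr j]; try simp only [birat, biratInv]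
  · have : Tendsto (fun j => (q j).1 + a - 1) atTop (𝓝 (1 + a - 1)) :=
      (h1.add tendsto_const_nhds).sub tendsto_const_nhds
    rw [show (1 : ℝ) + a - 1 = a by ring] at this
    exact this.congr fun j => by rw [hr j]; try simp only [birat, biratInv]

lemma bwd_PN (ha : a < -1) (hc : 0 < c)
    (hq : ∀ j, q j ∈ intRzero) (hr : ∀ j, r j = biratInv a (q j))
    (h1 : Tendsto (fun j => (q j).1) atTop (𝓝 c))
    (h2 : Tendsto (fun j => (q j).2) atTop atBot) :
    Tendsto (fun j => (r j).1) atTop atBot ∧ Tendsto (fun j => (r j).2) atTop (𝓝 c) := by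
  constructor
  · have := tendsto_atBot_add_const_right atTop (1 - a) h2
    exact this.congr fun j => by rw [hr j]; (try simp only [biratInv]); ring
  · have hrat := ratio_atBot a h2
    have hmul : Tendsto (fun j => (q j).1 * (((q j).2 - a) / ((q j).2 + 1))) atTop (𝓝 c) := by
      simpa using h1.mul hrat
    exact hmul.congr fun j => by rw [hr j]; (try simp only [biratInv]); rw [mul_div_assoc]

lemma bwd_NP (ha : a < -1) (hc : 0 < c)
    (hq : ∀ j, q j ∈ intRone) (hr : ∀ j, r j = biratInv a (q j))
    (h1 : Tendsto (fun j => (q j).1) atTop atBot)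
    (h2 : Tendsto (fun j => (q j).2) atTop (𝓝 c)) :
    Tendsto (fun j => (r j).1) atTop (𝓝 (c + 1 - a)) ∧
      Tendsto (fun j => (r j).2) atTop atBot := by
  have hden : c + 1 ≠ 0 := by positivity
  have hrat : Tendsto (fun j => ((q j).2 - a) / ((q j).2 + 1)) atTop (𝓝 ((c - a) / (c + 1))) :=
    (h2.sub tendsto_const_nhds).div (h2.add tendsto_const_nhds) hden
  have hratpos : 0 < (c - a) / (c + 1) := by apply div_pos <;> linarith
  constructor
  · have : Tendsto (fun j => (q j).2 + 1 - a) atTop (𝓝 (c + 1 - a)) :=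
      (h2.add tendsto_const_nhds).sub tendsto_const_nhds
    exact this.congr fun j => by rw [hr j]; try simp only [birat, biratInv]
  · have hmul : Tendsto (fun j => (q j).1 * (((q j).2 - a) / ((q j).2 + 1))) atTop atBot :=
      h1.atBot_mul_pos hratpos hrat
    exact hmul.congr fun j => by rw [hr j]; (try simp only [biratInv]); rw [mul_div_assoc]

lemma bwd_start (ha : a < -1) {z1 : ℝ} (hz1 : 1 ≤ z1)
    (hq : ∀ j, q j ∈ intRzero) (hr : ∀ j, r j = biratInv a (q j))
    (h1 : Tendsto (fun j => (q j).1) atTop (𝓝 z1))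
    (h2 : Tendsto (fun j => (q j).2) atTop (𝓝 (-1))) :
    Tendsto (fun j => (r j).1) atTop (𝓝 (-a)) ∧ Tendsto (fun j => (r j).2) atTop atBot := by
  have hcpos : 0 < z1 * (-1 - a) := mul_pos (by linarith) (by linarith)
  constructor
  · have : Tendsto (fun j => (q j).2 + 1 - a) atTop (𝓝 (-1 + 1 - a)) :=
      (h2.add tendsto_const_nhds).sub tendsto_const_nhds
    rw [show (-1 : ℝ) + 1 - a = -a by ring] at this
    exact this.congr fun j => by rw [hr j]; try simp only [birat, biratInv]
  · have hnum : Tendsto (fun j => (q j).1 * ((q j).2 - a)) atTop (𝓝 (z1 * (-1 - a))) :=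
      h1.mul (h2.sub tendsto_const_nhds)
    have hden : Tendsto (fun j => (q j).2 + 1) atTop (𝓝 0) := by
      have := h2.add (tendsto_const_nhds (x := (1 : ℝ)))
      simpa using this
    have hneg : ∀ j, (q j).2 + 1 < 0 := fun j => by have := (hq j).2; linarith
    have := div_tendsto_atBot hcpos hnum hden hneg
    exact this.congr fun j => by rw [hr j]; try simp only [birat, biratInv]

lemma inv_birat (a : ℝ) (q : ℝ × ℝ) (h1 : q.1 ≠ 1) (h2 : q.1 + a ≠ 0) :
    biratInv a (birat a q) = q := by
  have h1' : q.1 - 1 ≠ 0 := sub_ne_zero.mpr h1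
  unfold birat biratInv
  refine Prod.ext ?_ ?_
  · show q.1 + a - 1 + 1 - a = q.1; ring
  · show q.2 * (q.1 + a) / (q.1 - 1) * (q.1 + a - 1 - a) / (q.1 + a - 1 + 1) = q.2
    rw [show q.1 + a - 1 - a = q.1 - 1 by ring, show q.1 + a - 1 + 1 = q.1 + a by ring]
    field_simp

lemma birat_tendsto {z : ℝ × ℝ} (hz : z.1 ≠ 1)
    (hr : ∀ j, r j = birat a (q j)) (h : Tendsto q atTop (𝓝 z)) :
    Tendsto r atTop (𝓝 (birat a z)) := by
  have h1 := tfst h; have h2 := tsnd h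
  have hden : z.1 - 1 ≠ 0 := sub_ne_zero.mpr hz
  have c1 : Tendsto (fun j => (q j).2 * ((q j).1 + a) / ((q j).1 - 1)) atTop
      (𝓝 (z.2 * (z.1 + a) / (z.1 - 1))) :=
    ((h2.mul (h1.add tendsto_const_nhds)).div (h1.sub tendsto_const_nhds) hden)
  have c2 : Tendsto (fun j => (q j).1 + a - 1) atTop (𝓝 (z.1 + a - 1)) :=
    (h1.add tendsto_const_nhds).sub tendsto_const_nhds
  have := c1.prodMk_nhds c2
  exact this.congr fun j => by rw [hr j]; rfl

lemma biratInv_tendsto {z : ℝ × ℝ} (hz : z.2 ≠ -1)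
    (hr : ∀ j, r j = biratInv a (q j)) (h : Tendsto q atTop (𝓝 z)) :
    Tendsto r atTop (𝓝 (biratInv a z)) := by
  have h1 := tfst h; have h2 := tsnd h
  have hden : z.2 + 1 ≠ 0 := by intro h0; exact hz (by linarith)
  have c1 : Tendsto (fun j => (q j).2 + 1 - a) atTop (𝓝 (z.2 + 1 - a)) :=
    (h2.add tendsto_const_nhds).sub tendsto_const_nhds
  have c2 : Tendsto (fun j => (q j).1 * ((q j).2 - a) / ((q j).2 + 1)) atTop
      (𝓝 (z.1 * (z.2 - a) / (z.2 + 1))) :=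
    ((h1.mul (h2.sub tendsto_const_nhds)).div (h2.add tendsto_const_nhds) hden)
  have := c1.prodMk_nhds c2
  exact this.congr fun j => by rw [hr j]; rfl

end aux

lemma stepB_of_step (a : ℝ) (n m : ℕ) (w : ℤ → Fin 2) (Q : ℤ → ℝ × ℝ)
    (hstep : ∀ k : ℤ, -(n : ℤ) ≤ k → k < (m : ℤ) → Q (k + 1) = birat a (Q k))
    (hmem : ∀ k : ℤ, -(n : ℤ) ≤ k → k ≤ (m : ℤ) → Q k ∈ intRw (w k)) :
    ∀ l : ℤ, -(n : ℤ) ≤ l - 1 → l ≤ 0 → Q (l - 1) = biratInv a (Q l) := by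
  intro l hl1 hl0
  have hs := hstep (l - 1) hl1 (by omega)
  rw [sub_add_cancel] at hs
  have hmem1 := hmem (l - 1) hl1 (by omega)
  have hq1 : (Q (l - 1)).1 ≠ 1 := by
    rcases fin2 (w (l - 1)) with h | h <;> rw [h] at hmem1
    · rw [intRw_zero] at hmem1; exact ne_of_gt hmem1.1
    · rw [intRw_one] at hmem1; have := hmem1.1; intro h1; rw [h1] at this; linarith
  have hmem0 := hmem l (by omega) (by omega)
  have hy : (Q l).2 ≠ -1 := by
    rcases fin2 (w l) with h | h <;> rw [h] at hmem0
    · rw [intRw_zero] at hmem0; exact ne_of_lt hmem0.2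
    · rw [intRw_one] at hmem0; have := hmem0.2; intro h1; rw [h1] at this; linarith
  have hq2 : (Q (l - 1)).1 + a ≠ 0 := by
    intro h0
    apply hy
    rw [hs]
    show (Q (l - 1)).1 + a - 1 = -1
    rw [h0]; norm_num
  rw [hs, inv_birat a _ hq1 hq2]

lemma cascadeF (a : ℝ) (ha : a < -1) (n m : ℕ) (w : ℤ → Fin 2) (Q : ℕ → ℤ → ℝ × ℝ)
    (hstep : ∀ j, ∀ k : ℤ, -(n : ℤ) ≤ k → k < (m : ℤ) → Q j (k + 1) = birat a (Q j k))
    (hmem : ∀ j, ∀ k : ℤ, -(n : ℤ) ≤ k → k ≤ (m : ℤ) → Q j k ∈ intRw (w k)) :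
    ∀ d : ℕ, ∀ i₀ : ℤ, 0 ≤ i₀ → ∀ b : ℝ, b < 0 →
      Tendsto (fun j => (Q j i₀).1) atTop atTop →
      Tendsto (fun j => (Q j i₀).2) atTop (𝓝 b) →
      i₀ + d ≤ (m : ℤ) → w (i₀ + d) = if d % 2 = 0 then 0 else 1 := by
  intro d
  induction d using Nat.strong_induction_on with
  | _ d ih =>
  intro i₀ hi₀ b hb h1 h2 hdm
  have hi₀n : -(n : ℤ) ≤ i₀ := by omega
  have hi₀m : i₀ ≤ (m : ℤ) := by omega
  have hw0 : w i₀ = 0 := force_zero (fun j => hmem j i₀ hi₀n hi₀m) (h1.eventually_ge_atTop 0)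
  have hm0 : ∀ j, Q j i₀ ∈ intRzero := fun j => by
    have := hmem j i₀ hi₀n hi₀m; rwa [hw0, intRw_zero] at this
  rcases d with _ | d'
  · simpa using hw0
  · have h1m : i₀ + 1 ≤ (m : ℤ) := by omega
    have hs0 : ∀ j, Q j (i₀ + 1) = birat a (Q j i₀) := fun j => hstep j i₀ hi₀n (by omega)
    obtain ⟨hB1, hB2⟩ := fwd_AB ha hb hm0 hs0 h1 h2
    have hw1 : w (i₀ + 1) = 1 := force_one (fun j => hmem j (i₀ + 1) (by omega) h1m)
      ((hB1.eventually (gt_mem_nhds (show b < 1 by linarith))).mono fun j hj => le_of_lt hj)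
    rcases d' with _ | e
    · simpa using hw1
    · have hm1 : ∀ j, Q j (i₀ + 1) ∈ intRone := fun j => by
        have := hmem j (i₀ + 1) (by omega) h1m; rwa [hw1, intRw_one] at this
      have hs1 : ∀ j, Q j (i₀ + 1 + 1) = birat a (Q j (i₀ + 1)) := fun j =>
        hstep j (i₀ + 1) (by omega) (by omega)
      obtain ⟨hA1, hA2⟩ := fwd_BA ha hb hm1 hs1 hB1 hB2
      rw [show i₀ + 1 + 1 = i₀ + 2 from by ring] at hA1 hA2
      have hrec := ih e (by omega) (i₀ + 2) (by omega) (b + a - 1) (by linarith) hA1 hA2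
        (by omega)
      rw [show i₀ + ((e + 1 + 1 : ℕ) : ℤ) = i₀ + 2 + (e : ℤ) from by push_cast; ring]
      simp only [show ((e + 1 + 1) % 2) = e % 2 from by omega]
      exact hrec

lemma cascadeB (a : ℝ) (ha : a < -1) (n m : ℕ) (w : ℤ → Fin 2) (Q : ℕ → ℤ → ℝ × ℝ)
    (hstepB : ∀ j, ∀ l : ℤ, -(n : ℤ) ≤ l - 1 → l ≤ 0 → Q j (l - 1) = biratInv a (Q j l))
    (hmem : ∀ j, ∀ k : ℤ, -(n : ℤ) ≤ k → k ≤ (m : ℤ) → Q j k ∈ intRw (w k)) :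
    ∀ d : ℕ, ∀ i₀ : ℤ, i₀ ≤ 0 → ∀ c : ℝ, 0 < c →
      Tendsto (fun j => (Q j i₀).1) atTop (𝓝 c) →
      Tendsto (fun j => (Q j i₀).2) atTop atBot →
      -(n : ℤ) ≤ i₀ - d → w (i₀ - d) = if d % 2 = 0 then 0 else 1 := by
  intro d
  induction d using Nat.strong_induction_on with
  | _ d ih =>
  intro i₀ hi₀ c hc h1 h2 hnd
  have hi₀n : -(n : ℤ) ≤ i₀ := by omega
  have hi₀m : i₀ ≤ (m : ℤ) := by omega
  have hw0 : w i₀ = 0 := force_zero (fun j => hmem j i₀ hi₀n hi₀m)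
    ((h1.eventually (lt_mem_nhds hc)).mono fun j hj => le_of_lt hj)
  have hm0 : ∀ j, Q j i₀ ∈ intRzero := fun j => by
    have := hmem j i₀ hi₀n hi₀m; rwa [hw0, intRw_zero] at this
  rcases d with _ | d'
  · simpa using hw0
  · have h1n : -(n : ℤ) ≤ i₀ - 1 := by omega
    have hs0 : ∀ j, Q j (i₀ - 1) = biratInv a (Q j i₀) := fun j => hstepB j i₀ h1n hi₀
    obtain ⟨hN1, hN2⟩ := bwd_PN ha hc hm0 hs0 h1 h2
    have hw1 : w (i₀ - 1) = 1 := force_one (fun j => hmem j (i₀ - 1) h1n (by omega))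
      (hN1.eventually_le_atBot 1)
    rcases d' with _ | e
    · simpa using hw1
    · have hm1 : ∀ j, Q j (i₀ - 1) ∈ intRone := fun j => by
        have := hmem j (i₀ - 1) h1n (by omega); rwa [hw1, intRw_one] at this
      have hs1 : ∀ j, Q j (i₀ - 1 - 1) = biratInv a (Q j (i₀ - 1)) := fun j =>
        hstepB j (i₀ - 1) (by omega) (by omega)
      obtain ⟨hP1, hP2⟩ := bwd_NP ha hc hm1 hs1 hN1 hN2
      rw [show i₀ - 1 - 1 = i₀ - 2 from by ring] at hP1 hP2
      have hrec := ih e (by omega) (i₀ - 2) (by omega) (c + 1 - a) (by linarith) hP1 hP2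
        (by omega)
      rw [show i₀ - ((e + 1 + 1 : ℕ) : ℤ) = i₀ - 2 - (e : ℤ) from by push_cast; ring]
      simp only [show ((e + 1 + 1) % 2) = e % 2 from by omega]
      exact hrec

theorem stmt6 (a : ℝ) (ha : a < -1) (n m : ℕ) (w w' : ℤ → Fin 2)
    (hadm : ∀ k : ℤ, -(n : ℤ) ≤ k → k + 1 ≤ (m : ℤ) → ¬(w k = 1 ∧ w (k + 1) = 1))
    (hadm' : ∀ k : ℤ, -(n : ℤ) ≤ k → k + 1 ≤ (m : ℤ) → ¬(w' k = 1 ∧ w' (k + 1) = 1))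
    (hne : ∃ k : ℤ, -(n : ℤ) ≤ k ∧ k ≤ (m : ℤ) ∧ w k ≠ w' k) :
    Disjoint (closure (Sseg a n m w)) (closure (Sseg a n m w')) := by
  rw [Set.disjoint_left]
  intro p hp hp'
  rw [mem_closure_iff_seq_limit] at hp hp'
  obtain ⟨u, hu, hup⟩ := hp
  obtain ⟨u', hu', hup'⟩ := hp'
  simp only [Sseg, Set.mem_setOf_eq] at hu hu'
  choose Q hQ0 hQstep hQmem using hu
  choose Q' hQ'0 hQ'step hQ'mem using hu'
  have hup0 : Tendsto (fun j => Q j 0) atTop (𝓝 p) := by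
    have he : (fun j => Q j 0) = u := funext hQ0
    rw [he]; exact hup
  have hup0' : Tendsto (fun j => Q' j 0) atTop (𝓝 p) := by
    have he : (fun j => Q' j 0) = u' := funext hQ'0
    rw [he]; exact hup'
  obtain ⟨k, hkn, hkm, hkne⟩ := hne
  rcases le_or_gt 0 k with hk0 | hk0
  · -- forward case
    have keyF : ∀ t : ℕ, (t : ℤ) ≤ k → ∃ z : ℝ × ℝ,
        Tendsto (fun j => Q j (t : ℤ)) atTop (𝓝 z) ∧
        Tendsto (fun j => Q' j (t : ℤ)) atTop (𝓝 z) := by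
      intro t
      induction t with
      | zero => exact fun _ => ⟨p, by simpa using hup0, by simpa using hup0'⟩
      | succ t ihp =>
        intro ht
        have ht' : (t : ℤ) ≤ k := by omega
        obtain ⟨z, hz, hz'⟩ := ihp ht'
        have htn : -(n : ℤ) ≤ (t : ℤ) := by omega
        have htm : (t : ℤ) ≤ (m : ℤ) := by omega
        have hcast : ((t + 1 : ℕ) : ℤ) = (t : ℤ) + 1 := by push_cast; ring
        have hsQ : ∀ j, Q j ((t : ℤ) + 1) = birat a (Q j (t : ℤ)) := fun j =>
          hQstep j t htn (by omega)
        have hsQ' : ∀ j, Q' j ((t : ℤ) + 1) = birat a (Q' j (t : ℤ)) := fun j =>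
          hQ'step j t htn (by omega)
        by_cases hsing : z.1 = 1
        · exfalso
          have hwz : z ∈ Rw (w t) := lim_mem (fun j => hQmem j t htn htm) hz
          have hwz' : z ∈ Rw (w' t) := lim_mem (fun j => hQ'mem j t htn htm) hz'
          have hwt : w (t : ℤ) = 0 := by
            rcases fin2 (w (t : ℤ)) with h | h
            · exact h
            · exfalso; rw [h, Rw_one] at hwz; have : z.1 ≤ 0 := hwz.1; linarith [hsing ▸ this]
          have hwt' : w' (t : ℤ) = 0 := by
            rcases fin2 (w' (t : ℤ)) with h | h
            · exact h
            · exfalso; rw [h, Rw_one] at hwz'; have : z.1 ≤ 0 := hwz'.1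
              rw [hsing] at this; linarith
          have hz2 : z.2 ≤ -1 := by
            have := hwz; rw [hwt, Rw_zero] at this; exact this.2
          have hm0 : ∀ j, Q j (t : ℤ) ∈ intRzero := fun j => by
            have := hQmem j t htn htm; rwa [hwt, intRw_zero] at this
          have hm0' : ∀ j, Q' j (t : ℤ) ∈ intRzero := fun j => by
            have := hQ'mem j t htn htm; rwa [hwt', intRw_zero] at this
          have h1z : Tendsto (fun j => (Q j (t : ℤ)).1) atTop (𝓝 1) := by
            have := tfst hz; rwa [hsing] at this
          have h1z' : Tendsto (fun j => (Q' j (t : ℤ)).1) atTop (𝓝 1) := by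
            have := tfst hz'; rwa [hsing] at this
          obtain ⟨hA1, hA2⟩ := fwd_start ha hz2 hm0 hsQ h1z (tsnd hz)
          obtain ⟨hA1', hA2'⟩ := fwd_start ha hz2 hm0' hsQ' h1z' (tsnd hz')
          set d := (k - ((t : ℤ) + 1)).toNat with hd
          have hdk : (t : ℤ) + 1 + (d : ℤ) = k := by omega
          have hc1 := cascadeF a ha n m w Q hQstep hQmem d ((t : ℤ) + 1) (by omega) a
            (by linarith) hA1 hA2 (by omega)
          have hc2 := cascadeF a ha n m w' Q' hQ'step hQ'mem d ((t : ℤ) + 1) (by omega) a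
            (by linarith) hA1' hA2' (by omega)
          rw [hdk] at hc1 hc2
          exact hkne (hc1.trans hc2.symm)
        · refine ⟨birat a z, ?_, ?_⟩
          · have := birat_tendsto hsing hsQ hz
            exact this.congr fun j => by rw [hcast]
          · have := birat_tendsto hsing hsQ' hz'
            exact this.congr fun j => by rw [hcast]
    obtain ⟨z, hz, hz'⟩ := keyF k.toNat (by omega)
    have hct : ((k.toNat : ℕ) : ℤ) = k := by omega
    rw [hct] at hz hz'
    have m1 : z ∈ Rw (w k) := lim_mem (fun j => hQmem j k hkn hkm) hz
    have m2 : z ∈ Rw (w' k) := lim_mem (fun j => hQ'mem j k hkn hkm) hz'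
    exact hkne (Rw_unique m1 m2)
  · -- backward case
    have hB : ∀ j, ∀ l : ℤ, -(n : ℤ) ≤ l - 1 → l ≤ 0 →
        Q j (l - 1) = biratInv a (Q j l) := fun j =>
      stepB_of_step a n m w (Q j) (hQstep j) (hQmem j)
    have hB' : ∀ j, ∀ l : ℤ, -(n : ℤ) ≤ l - 1 → l ≤ 0 →
        Q' j (l - 1) = biratInv a (Q' j l) := fun j =>
      stepB_of_step a n m w' (Q' j) (hQ'step j) (hQ'mem j)
    have keyB : ∀ t : ℕ, (t : ℤ) ≤ -k → ∃ z : ℝ × ℝ,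
        Tendsto (fun j => Q j (-(t : ℤ))) atTop (𝓝 z) ∧
        Tendsto (fun j => Q' j (-(t : ℤ))) atTop (𝓝 z) := by
      intro t
      induction t with
      | zero => exact fun _ => ⟨p, by simpa using hup0, by simpa using hup0'⟩
      | succ t ihp =>
        intro ht
        have ht' : (t : ℤ) ≤ -k := by omega
        obtain ⟨z, hz, hz'⟩ := ihp ht'
        have htn : -(n : ℤ) ≤ -(t : ℤ) := by omega
        have htm : -(t : ℤ) ≤ (m : ℤ) := by omega
        have hcast : -((t + 1 : ℕ) : ℤ) = -(t : ℤ) - 1 := by push_cast; ring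
        have hsQ : ∀ j, Q j (-(t : ℤ) - 1) = biratInv a (Q j (-(t : ℤ))) := fun j =>
          hB j (-(t : ℤ)) (by omega) (by omega)
        have hsQ' : ∀ j, Q' j (-(t : ℤ) - 1) = biratInv a (Q' j (-(t : ℤ))) := fun j =>
          hB' j (-(t : ℤ)) (by omega) (by omega)
        by_cases hsing : z.2 = -1
        · exfalso
          have hwz : z ∈ Rw (w (-(t : ℤ))) := lim_mem (fun j => hQmem j (-(t : ℤ)) htn htm) hz
          have hwz' : z ∈ Rw (w' (-(t : ℤ))) :=
            lim_mem (fun j => hQ'mem j (-(t : ℤ)) htn htm) hz'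
          have hwt : w (-(t : ℤ)) = 0 := by
            rcases fin2 (w (-(t : ℤ))) with h | h
            · exact h
            · exfalso; rw [h, Rw_one] at hwz; have : (0 : ℝ) ≤ z.2 := hwz.2
              rw [hsing] at this; linarith
          have hwt' : w' (-(t : ℤ)) = 0 := by
            rcases fin2 (w' (-(t : ℤ))) with h | h
            · exact h
            · exfalso; rw [h, Rw_one] at hwz'; have : (0 : ℝ) ≤ z.2 := hwz'.2
              rw [hsing] at this; linarith
          have hz1 : 1 ≤ z.1 := by
            have := hwz; rw [hwt, Rw_zero] at this; exact this.1
          have hm0 : ∀ j, Q j (-(t : ℤ)) ∈ intRzero := fun j => by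
            have := hQmem j (-(t : ℤ)) htn htm; rwa [hwt, intRw_zero] at this
          have hm0' : ∀ j, Q' j (-(t : ℤ)) ∈ intRzero := fun j => by
            have := hQ'mem j (-(t : ℤ)) htn htm; rwa [hwt', intRw_zero] at this
          have h2z : Tendsto (fun j => (Q j (-(t : ℤ))).2) atTop (𝓝 (-1)) := by
            have := tsnd hz; rwa [hsing] at this
          have h2z' : Tendsto (fun j => (Q' j (-(t : ℤ))).2) atTop (𝓝 (-1)) := by
            have := tsnd hz'; rwa [hsing] at this
          obtain ⟨hP1, hP2⟩ := bwd_start ha hz1 hm0 hsQ (tfst hz) h2z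
          obtain ⟨hP1', hP2'⟩ := bwd_start ha hz1 hm0' hsQ' (tfst hz') h2z'
          set d := ((-(t : ℤ) - 1) - k).toNat with hd
          have hdk : -(t : ℤ) - 1 - (d : ℤ) = k := by omega
          have hc1 := cascadeB a ha n m w Q hB hQmem d (-(t : ℤ) - 1) (by omega) (-a)
            (by linarith) hP1 hP2 (by omega)
          have hc2 := cascadeB a ha n m w' Q' hB' hQ'mem d (-(t : ℤ) - 1) (by omega) (-a)
            (by linarith) hP1' hP2' (by omega)
          rw [hdk] at hc1 hc2
          exact hkne (hc1.trans hc2.symm)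
        · refine ⟨biratInv a z, ?_, ?_⟩
          · have := biratInv_tendsto hsing hsQ hz
            exact this.congr fun j => by rw [hcast]
          · have := biratInv_tendsto hsing hsQ' hz'
            exact this.congr fun j => by rw [hcast]
    obtain ⟨z, hz, hz'⟩ := keyB (-k).toNat (by omega)
    have hct : -(((-k).toNat : ℕ) : ℤ) = k := by omega
    rw [hct] at hz hz'
    have m1 : z ∈ Rw (w k) := lim_mem (fun j => hQmem j k hkn hkm) hz
    have m2 : z ∈ Rw (w' k) := lim_mem (fun j => hQ'mem j k hkn hkm) hz'
    exact hkne (Rw_unique m1 m2)
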